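/- Let V be a non-empty open subset of ℝⁿ, and let V₁ ⊂ V₂ ⊂ ⋯ be an exhaustion of V by non-empty open sets with smooth boundary satisfying closure(V_k) ⊂ V_{k+1} and ⋃_k V_k = V. Suppose σ_k : V_{k+1} → ℝⁿ are smooth embeddings with σ_k restricted to V_{k-1} equal to σ_{k-1} restricted to V_{k-1}, σ_k(V_k) ⊂ B_k, and |B_k \ σ_k(V_k)| ≤ 2^{-k} for all k. Then the map σ : V → ℝⁿ defined by σ|_{V_k} = σ_k|_{V_k} is a well-defined smooth embedding whose image has full Lebesgue measure in ℝⁿ. -/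

import Mathlib

open MeasureTheory Topology

/-- The open set `A` has smooth boundary: locally it is a sublevel set of a smooth function
with non-vanishing derivative. -/
def HasSmoothBoundary {n : ℕ} (A : Set (EuclideanSpace ℝ (Fin n))) : Prop :=
  ∀ x ∈ frontier A, ∃ (f : EuclideanSpace ℝ (Fin n) → ℝ) (u : Set (EuclideanSpace ℝ (Fin n))),
    IsOpen u ∧ x ∈ u ∧ ContDiff ℝ (⊤ : ℕ∞) f ∧ (∀ y ∈ u, fderiv ℝ f y ≠ 0) ∧
    A ∩ u = { y ∈ u | f y < 0 }

/-- `σ` restricted to `A` is a smooth embedding: a smooth injective immersion which is a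
homeomorphism onto its image. -/
def IsSmoothEmbeddingOn {n : ℕ}
    (σ : EuclideanSpace ℝ (Fin n) → EuclideanSpace ℝ (Fin n))
    (A : Set (EuclideanSpace ℝ (Fin n))) : Prop :=
  ContDiffOn ℝ (⊤ : ℕ∞) σ A ∧ Set.InjOn σ A ∧
  (∀ x ∈ A, Function.Injective (fderivWithin ℝ σ A x)) ∧
  Topology.IsEmbedding (A.restrict σ)

/-- Gluing step in the proof of Proposition 2:  given an exhaustion `V₁ ⊂ V₂ ⊂ ⋯` of the
non-empty open set `V ⊆ ℝⁿ` by non-empty open sets with smooth boundary with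
`closure (V k) ⊆ V (k+1)`, and smooth embeddings `σ k : V (k+1) → ℝⁿ` with
`σ k = σ (k-1)` on `V (k-1)`, `σ k '' (V k) ⊆ B k` and `|B k \ σ k '' (V k)| ≤ 2⁻ᵏ`
(where `B k` is the open ball of radius `k`), the map `σ` defined by `σ = σ k` on `V k` is a
well defined smooth embedding of `V` whose image has full Lebesgue measure.
(All hypotheses are indexed by `k ≥ 1`, written below as `k + 1`.) -/
theorem glued_embedding_full_measure (n : ℕ)
    (VV : Set (EuclideanSpace ℝ (Fin n))) (hVV : IsOpen VV) (hVVne : VV.Nonempty)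
    (V : ℕ → Set (EuclideanSpace ℝ (Fin n)))
    (hopen : ∀ k : ℕ, IsOpen (V (k + 1)))
    (hne : ∀ k : ℕ, (V (k + 1)).Nonempty)
    (hsmoothbd : ∀ k : ℕ, HasSmoothBoundary (V (k + 1)))
    (hsub : ∀ k : ℕ, closure (V (k + 1)) ⊆ V (k + 2))
    (hunion : (⋃ k : ℕ, V (k + 1)) = VV)
    (σ : ℕ → EuclideanSpace ℝ (Fin n) → EuclideanSpace ℝ (Fin n))
    (hemb : ∀ k : ℕ, IsSmoothEmbeddingOn (σ (k + 1)) (V (k + 2)))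
    (hcompat : ∀ k : ℕ, Set.EqOn (σ (k + 2)) (σ (k + 1)) (V (k + 1)))
    (hball : ∀ k : ℕ, σ (k + 1) '' V (k + 1) ⊆ Metric.ball (0 : EuclideanSpace ℝ (Fin n)) (k + 1))
    (hmeas : ∀ k : ℕ,
      volume (Metric.ball (0 : EuclideanSpace ℝ (Fin n)) (k + 1) \ σ (k + 1) '' V (k + 1)) ≤
        2⁻¹ ^ (k + 1)) :
    ∃ τ : EuclideanSpace ℝ (Fin n) → EuclideanSpace ℝ (Fin n),
      (∀ k : ℕ, Set.EqOn τ (σ (k + 1)) (V (k + 1))) ∧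
      IsSmoothEmbeddingOn τ VV ∧ volume ((τ '' VV)ᶜ) = 0 := by
  classical
  -- monotonicity of the exhaustion
  have Vmono : ∀ k m : ℕ, k ≤ m → V (k + 1) ⊆ V (m + 1) := by
    intro k m hkm
    induction m, hkm using Nat.le_induction with
    | base => exact subset_rfl
    | succ m hm ih => exact ih.trans (subset_closure.trans (hsub m))
  -- agreement of the σ's
  have hagree : ∀ k m : ℕ, k ≤ m → Set.EqOn (σ (m + 1)) (σ (k + 1)) (V (k + 1)) := by
    intro k m hkm
    induction m, hkm using Nat.le_induction with
    | base => exact Set.eqOn_refl _ _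
    | succ m hm ih =>
      intro x hx
      exact (hcompat m (Vmono k m hm hx)).trans (ih hx)
  set τ : EuclideanSpace ℝ (Fin n) → EuclideanSpace ℝ (Fin n) :=
    fun x => if h : ∃ k, x ∈ V (k + 1) then σ (Nat.find h + 1) x else 0 with hτdef
  have hτ : ∀ k : ℕ, Set.EqOn τ (σ (k + 1)) (V (k + 1)) := by
    intro k x hx
    have h : ∃ j, x ∈ V (j + 1) := ⟨k, hx⟩
    have hle : Nat.find h ≤ k := Nat.find_min' h hx
    simp only [hτdef, dif_pos h]
    exact (hagree (Nat.find h) k hle (Nat.find_spec h)).symm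
  have hmem : ∀ x ∈ VV, ∃ k, x ∈ V (k + 1) := by
    intro x hx
    rw [← hunion] at hx
    simpa using hx
  have hmem' : ∀ k : ℕ, V (k + 1) ⊆ VV := by
    intro k x hx
    rw [← hunion]
    exact Set.mem_iUnion.2 ⟨k, hx⟩
  -- eventual equality near points
  have hev : ∀ k : ℕ, ∀ x ∈ V (k + 1), τ =ᶠ[𝓝 x] σ (k + 1) := fun k x hx =>
    Filter.eventuallyEq_of_mem ((hopen k).mem_nhds hx) (hτ k)
  -- smoothness at points
  have hcdAt : ∀ k : ℕ, ∀ x ∈ V (k + 1), ContDiffAt ℝ (⊤ : ℕ∞) (σ (k + 1)) x := by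
    intro k x hx
    exact (hemb k).1.contDiffAt ((hopen (k + 1)).mem_nhds (Vmono k (k + 1) (Nat.le_succ k) hx))
  -- the glued map sends neighbourhoods to neighbourhoods (inverse function theorem)
  have key : ∀ k : ℕ, ∀ x ∈ V (k + 1), Filter.map τ (𝓝 x) = 𝓝 (τ x) := by
    intro k x hx
    have hx2 : x ∈ V (k + 2) := Vmono k (k + 1) (Nat.le_succ k) hx
    have hfd : fderivWithin ℝ (σ (k + 1)) (V (k + 2)) x = fderiv ℝ (σ (k + 1)) x :=
      fderivWithin_of_isOpen (hopen (k + 1)) hx2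
    have hinj : Function.Injective (fderiv ℝ (σ (k + 1)) x) := by
      rw [← hfd]; exact (hemb k).2.2.1 x hx2
    have hsurj : Function.Surjective (fderiv ℝ (σ (k + 1)) x) :=
      LinearMap.injective_iff_surjective.mp hinj
    let e : EuclideanSpace ℝ (Fin n) ≃L[ℝ] EuclideanSpace ℝ (Fin n) :=
      LinearEquiv.toContinuousLinearEquiv
        (LinearEquiv.ofBijective ((fderiv ℝ (σ (k + 1)) x) : _ →ₗ[ℝ] _) ⟨hinj, hsurj⟩)
    have hstrict : HasStrictFDerivAt (σ (k + 1)) (e : _ →L[ℝ] _) x := by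
      have he : (e : EuclideanSpace ℝ (Fin n) →L[ℝ] EuclideanSpace ℝ (Fin n))
          = fderiv ℝ (σ (k + 1)) x := by ext v; rfl
      rw [he]; exact (hcdAt k x hx).hasStrictFDerivAt (by simp)
    have hmap : Filter.map (σ (k + 1)) (𝓝 x) = 𝓝 (σ (k + 1) x) :=
      hstrict.map_nhds_eq_of_equiv
    rw [Filter.map_congr (hev k x hx), hmap, hτ k hx]
  refine ⟨τ, hτ, ⟨?_, ?_, ?_, ?_⟩, ?_⟩
  · -- ContDiffOn
    intro x hx
    obtain ⟨k, hk⟩ := hmem x hx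
    exact ((hcdAt k x hk).congr_of_eventuallyEq (hev k x hk)).contDiffWithinAt
  · -- InjOn
    intro x hx y hy hxy
    obtain ⟨k, hk⟩ := hmem x hx
    obtain ⟨j, hj⟩ := hmem y hy
    have hxm : x ∈ V (max k j + 1) := Vmono k (max k j) (le_max_left k j) hk
    have hym : y ∈ V (max k j + 1) := Vmono j (max k j) (le_max_right k j) hj
    refine (hemb (max k j)).2.1 (Vmono _ _ (Nat.le_succ _) hxm) (Vmono _ _ (Nat.le_succ _) hym) ?_
    rw [← hτ (max k j) hxm, ← hτ (max k j) hym]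
    exact hxy
  · -- injective differential
    intro x hx
    obtain ⟨k, hk⟩ := hmem x hx
    have hx2 : x ∈ V (k + 2) := Vmono k (k + 1) (Nat.le_succ k) hk
    have h1 : fderivWithin ℝ τ VV x = fderiv ℝ τ x := fderivWithin_of_isOpen hVV hx
    have h2 : fderiv ℝ τ x = fderiv ℝ (σ (k + 1)) x := (hev k x hk).fderiv_eq
    have h3 : fderiv ℝ (σ (k + 1)) x = fderivWithin ℝ (σ (k + 1)) (V (k + 2)) x :=
      (fderivWithin_of_isOpen (hopen (k + 1)) hx2).symm
    rw [h1, h2, h3]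
    exact (hemb k).2.2.1 x hx2
  · -- embedding
    have hcont : ContinuousOn τ VV := by
      intro x hx
      obtain ⟨k, hk⟩ := hmem x hx
      exact (((hcdAt k x hk).congr_of_eventuallyEq (hev k x hk)).continuousAt).continuousWithinAt
    have hinjOn : Set.InjOn τ VV := by
      intro x hx y hy hxy
      obtain ⟨k, hk⟩ := hmem x hx
      obtain ⟨j, hj⟩ := hmem y hy
      have hxm : x ∈ V (max k j + 1) := Vmono k (max k j) (le_max_left k j) hk
      have hym : y ∈ V (max k j + 1) := Vmono j (max k j) (le_max_right k j) hj
      refine (hemb (max k j)).2.1 (Vmono _ _ (Nat.le_succ _) hxm)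
        (Vmono _ _ (Nat.le_succ _) hym) ?_
      rw [← hτ (max k j) hxm, ← hτ (max k j) hym]
      exact hxy
    have hopenmap : IsOpenMap (VV.restrict τ) := by
      refine IsOpenMap.of_nhds_le ?_
      rintro ⟨x, hx⟩
      obtain ⟨k, hk⟩ := hmem x hx
      have h1 : Filter.map (Subtype.val : VV → _) (𝓝 (⟨x, hx⟩ : VV)) = 𝓝 x :=
        hVV.isOpenEmbedding_subtypeVal.map_nhds_eq ⟨x, hx⟩
      have : Filter.map (VV.restrict τ) (𝓝 (⟨x, hx⟩ : VV)) = 𝓝 (τ x) := by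
        have : VV.restrict τ = τ ∘ (Subtype.val : VV → _) := rfl
        rw [this, ← Filter.map_map, h1, key k x hk]
      rw [this]
      exact le_rfl
    exact (IsOpenEmbedding.of_continuous_injective_isOpenMap
      (continuousOn_iff_continuous_restrict.mp hcont)
      (Set.injOn_iff_injective.mp hinjOn) hopenmap).isEmbedding
  · -- full measure
    have himage : ∀ k : ℕ, σ (k + 1) '' V (k + 1) ⊆ τ '' VV := by
      rintro k y ⟨x, hx, rfl⟩
      exact ⟨x, hmem' k hx, hτ k hx⟩
    have hnull : ∀ j : ℕ, volume ((τ '' VV)ᶜ ∩ Metric.ball (0 : EuclideanSpace ℝ (Fin n)) (j + 1)) = 0 := by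
      intro j
      have hb : ∀ k : ℕ, j ≤ k →
          volume ((τ '' VV)ᶜ ∩ Metric.ball (0 : EuclideanSpace ℝ (Fin n)) (j + 1))
            ≤ 2⁻¹ ^ (k + 1) := by
        intro k hjk
        refine le_trans (measure_mono ?_) (hmeas k)
        rintro y ⟨hyc, hyb⟩
        refine ⟨Metric.ball_subset_ball ?_ hyb, fun hy => hyc (himage k hy)⟩
        have : (j : ℝ) ≤ k := Nat.cast_le.mpr hjk
        linarith
      have htend : Filter.Tendsto (fun k : ℕ => (2⁻¹ : ENNReal) ^ (k + 1)) Filter.atTop (𝓝 0) := by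
        have h0 : Filter.Tendsto (fun k : ℕ => (2⁻¹ : ENNReal) ^ k) Filter.atTop (𝓝 0) :=
          ENNReal.tendsto_pow_atTop_nhds_zero_of_lt_one (by norm_num)
        exact h0.comp (Filter.tendsto_add_atTop_nat 1)
      refine le_antisymm ?_ zero_le
      exact ge_of_tendsto htend (Filter.eventually_atTop.2 ⟨j, hb⟩)
    have hcover : (τ '' VV)ᶜ ⊆ ⋃ j : ℕ, (τ '' VV)ᶜ ∩ Metric.ball (0 : EuclideanSpace ℝ (Fin n)) (j + 1) := by
      intro y hy
      obtain ⟨j, hj⟩ := exists_nat_gt (dist y (0 : EuclideanSpace ℝ (Fin n)))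
      refine Set.mem_iUnion.2 ⟨j, hy, ?_⟩
      simp only [Metric.mem_ball]
      linarith
    refine le_antisymm (le_trans (measure_mono hcover) ?_) zero_le
    rw [measure_iUnion_null hnull]
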